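/- arXiv:1304.5739 — 3 statements merged into one kernel-verified Lean document; each statement's English description precedes it below -/
import Mathlib

section
/- Let B = (B₁,B₂,B₃) ∈ ℝ³. The 6×6 symmetric matrix M given by rows (1,0,0,B₂,-B₁,0), (0,1,0,B₃,0,-B₁), (0,0,1,0,B₃,-B₂), (B₂,B₃,0,1,0,0), (-B₁,0,B₃,0,1,0), (0,-B₁,-B₂,0,0,1) has eigenvalues 1 (with multiplicity 2) and 1 ± √(B₁²+B₂²+B₃²) (each with multiplicity 2). -/
open Polynomial

/-- The 6×6 leading matrix of the symmetric hyperbolic system governing the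
propagation of the antisymmetry `R_{ijkl} = -R_{ijlk}`. -/
def leadingMatrix6 (B : Fin 3 → ℝ) : Matrix (Fin 6) (Fin 6) ℝ :=
  !![1, 0, 0, B 1, -B 0, 0;
     0, 1, 0, B 2, 0, -B 0;
     0, 0, 1, 0, B 2, -B 1;
     B 1, B 2, 0, 1, 0, 0;
     -B 0, 0, B 2, 0, 1, 0;
     0, -B 0, -B 1, 0, 0, 1]

/-!
Write `M = leadingMatrix6 B` as `1 + N` with `N = [[0, A], [Aᵀ, 0]]`, `A = leadingBlock B`,
so that `χ_M(X) = χ_N(X - 1)`.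
Since the diagonal blocks of `X - N` are scalar, `χ_N(X) = χ_{AAᵀ}(X²)`, and
`AAᵀ = |B|² - v vᵀ` with `|v| = |B|`, so `χ_{AAᵀ}(X) = X (X - |B|²)²`.
-/

namespace Matrix

variable {R : Type*} [CommRing R] {n : Type*} [Fintype n] [DecidableEq n]

theorem det_fromBlocks_mul_det_of_commute (A B C D : Matrix n n R) (hCD : Commute C D) :
    (fromBlocks A B C D).det * D.det = (A * D - B * C).det * D.det := by
  -- `C * D = D * C` kills the lower left block of the product.
  have hmul : fromBlocks A B C D * fromBlocks D 0 (-C) 1 = fromBlocks (A * D - B * C) B 0 D := by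
    simp [fromBlocks_multiply, hCD.eq, sub_eq_add_neg]
  rw [← det_fromBlocks_zero₂₁ _ B, ← hmul, det_mul, det_fromBlocks_zero₁₂, det_one, mul_one]

theorem charpoly_fromBlocks_zero₁₁_zero₂₂ (A B : Matrix n n R) :
    (fromBlocks 0 A B 0).charpoly = (A * B).charpoly.comp (X ^ 2) := by
  have hcomm : Commute (-B.map C) (scalar n (X : R[X])) := (scalar_commute _ (Commute.all _) _).symm
  have hdet := det_fromBlocks_mul_det_of_commute (scalar n X) (-A.map C) _ _ hcomm
  have hX : (scalar n (X : R[X])).det = X ^ Fintype.card n := by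
    simp [scalar_apply, det_diagonal]
  rw [hX, (isRegular_X_pow _).right.eq_iff] at hdet
  rw [charpoly, charmatrix_fromBlocks, charmatrix_zero, hdet, charpoly, ← coe_compRingHom_apply,
    RingHom.map_det, neg_mul_neg, ← Matrix.map_mul]
  congr 1
  ext i j : 1
  by_cases hij : i = j <;> simp [hij, sq, -Matrix.map_mul]

theorem charpoly_add_scalar (M : Matrix n n R) (μ : R) :
    (M + scalar n μ).charpoly = M.charpoly.comp (X - C μ) := by
  rw [← add_sub_cancel_right M (scalar n μ), charpoly_sub_scalar, comp_assoc]
  simp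

end Matrix

open Matrix

def leadingBlock (B : Fin 3 → ℝ) : Matrix (Fin 3) (Fin 3) ℝ :=
  !![B 1, -B 0, 0; B 2, 0, -B 0; 0, B 2, -B 1]

theorem leadingMatrix6_eq_reindex (B : Fin 3 → ℝ) :
    leadingMatrix6 B = reindex finSumFinEquiv finSumFinEquiv
      (fromBlocks 0 (leadingBlock B) (leadingBlock B)ᵀ 0 + scalar _ 1) := by
  rw [map_one, ← fromBlocks_one, fromBlocks_add]
  simp only [zero_add, add_zero]
  ext i j
  fin_cases i <;> fin_cases j <;> rfl

theorem leadingBlock_mul_transpose (B : Fin 3 → ℝ) :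
    leadingBlock B * (leadingBlock B)ᵀ =
      vecMulVec (-![B 2, -B 1, B 0]) ![B 2, -B 1, B 0] + scalar _ (B 0 ^ 2 + B 1 ^ 2 + B 2 ^ 2) := by
  ext i j
  fin_cases i <;> fin_cases j <;> simp [leadingBlock, mul_apply, Fin.sum_univ_three] <;> ring

theorem charpoly_leadingBlock_mul_transpose (B : Fin 3 → ℝ) :
    (leadingBlock B * (leadingBlock B)ᵀ).charpoly =
      X * (X - C (B 0 ^ 2 + B 1 ^ 2 + B 2 ^ 2)) ^ 2 := by
  rw [leadingBlock_mul_transpose, charpoly_add_scalar, charpoly_vecMulVec]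
  simp [dotProduct, Fin.sum_univ_three, smul_eq_C_mul]
  ring

/-- The eigenvalues of the 6×6 leading matrix are `1` and
`1 ± √(B₁²+B₂²+B₃²)`, each with multiplicity 2, expressed via the
characteristic polynomial. -/
theorem stmt_1 (B : Fin 3 → ℝ) :
    (leadingMatrix6 B).charpoly =
      (X - C 1) ^ 2 *
        (X - C (1 + Real.sqrt (B 0 ^ 2 + B 1 ^ 2 + B 2 ^ 2))) ^ 2 *
        (X - C (1 - Real.sqrt (B 0 ^ 2 + B 1 ^ 2 + B 2 ^ 2))) ^ 2 := by
  rw [leadingMatrix6_eq_reindex, charpoly_reindex, charpoly_add_scalar,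
    charpoly_fromBlocks_zero₁₁_zero₂₂, charpoly_leadingBlock_mul_transpose]
  have hsq : C (Real.sqrt (B 0 ^ 2 + B 1 ^ 2 + B 2 ^ 2)) ^ 2 = C (B 0 ^ 2 + B 1 ^ 2 + B 2 ^ 2) := by
    rw [← C_pow, Real.sq_sqrt (by positivity)]
  generalize B 0 ^ 2 + B 1 ^ 2 + B 2 ^ 2 = s at hsq ⊢
  simp only [mul_comp, pow_comp, sub_comp, X_comp, C_comp, C_add, C_sub]
  linear_combination (X - C 1) ^ 2 * (2 * (X - C 1) ^ 2 - C s - C (Real.sqrt s) ^ 2) * hsq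
end

section
/- Let B = (B₁,B₂,B₃) ∈ ℝ³ with B₁² + B₂² + B₃² < 1. Then the 6×6 symmetric matrix from the previous statement is positive definite. -/
namespace Matrix

section FromBlocksOne

variable {m n : Type*} [Fintype m] [Fintype n] [DecidableEq m] [DecidableEq n]

theorem sumElim_dotProduct_fromBlocks_one_mulVec {R : Type*} [CommRing R] (C : Matrix m n R)
    (u : m → R) (v : n → R) :
    Sum.elim u v ⬝ᵥ (fromBlocks 1 C Cᵀ 1 *ᵥ Sum.elim u v) =
      (u + C *ᵥ v) ⬝ᵥ (u + C *ᵥ v) + (v ⬝ᵥ v - C *ᵥ v ⬝ᵥ C *ᵥ v) := by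
  rw [fromBlocks_mulVec, Sum.elim_comp_inl, Sum.elim_comp_inr, sumElim_dotProduct_sumElim,
    one_mulVec, one_mulVec, mulVec_transpose]
  simp only [dotProduct_add, add_dotProduct]
  rw [dotProduct_comm v (u ᵥ* C), ← dotProduct_mulVec, dotProduct_comm (C *ᵥ v) u]
  ring

theorem posDef_fromBlocks_one_of_strict_contraction (C : Matrix m n ℝ)
    (hC : ∀ v ≠ 0, C *ᵥ v ⬝ᵥ C *ᵥ v < v ⬝ᵥ v) : (fromBlocks 1 C Cᵀ 1).PosDef := by
  refine posDef_iff_dotProduct_mulVec.2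
    ⟨IsHermitian.fromBlocks isHermitian_one (by simp) isHermitian_one, fun x hx => ?_⟩
  obtain ⟨u, v, rfl⟩ : ∃ u v, x = Sum.elim u v := ⟨_, _, (Sum.elim_comp_inl_inr x).symm⟩
  rw [star_trivial, sumElim_dotProduct_fromBlocks_one_mulVec]
  obtain rfl | hv := eq_or_ne v 0
  · have hu : u ≠ 0 := by rintro rfl; exact hx Sum.elim_zero_zero
    simpa using dotProduct_star_self_pos_iff.2 hu
  · have h_sq : 0 ≤ (u + C *ᵥ v) ⬝ᵥ (u + C *ᵥ v) := by
      simpa using dotProduct_star_self_nonneg (u + C *ᵥ v)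
    linarith [hC v hv]

end FromBlocksOne

/-- `wedgeMatrix B *ᵥ v` lists the coordinates of `v ∧ B` in the basis `e₀∧e₁, e₀∧e₂, e₁∧e₂`. -/
def wedgeMatrix {R : Type*} [CommRing R] (B : Fin 3 → R) : Matrix (Fin 3) (Fin 3) R :=
  !![B 1, -B 0, 0; B 2, 0, -B 0; 0, B 2, -B 1]

theorem wedgeMatrix_mulVec_dotProduct_self {R : Type*} [CommRing R] (B v : Fin 3 → R) :
    wedgeMatrix B *ᵥ v ⬝ᵥ wedgeMatrix B *ᵥ v = v ⨯₃ B ⬝ᵥ v ⨯₃ B := by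
  simp only [wedgeMatrix, cross_apply, mulVec, dotProduct, Fin.sum_univ_three, of_apply,
    cons_val', cons_val_fin_one, cons_val_zero, cons_val_one, cons_val]
  ring

theorem wedgeMatrix_mulVec_dotProduct_self_lt {B : Fin 3 → ℝ} (hB : B ⬝ᵥ B < 1) {v : Fin 3 → ℝ}
    (hv : v ≠ 0) : wedgeMatrix B *ᵥ v ⬝ᵥ wedgeMatrix B *ᵥ v < v ⬝ᵥ v := by
  have hv_pos : 0 < v ⬝ᵥ v := by simpa using dotProduct_star_self_pos_iff.2 hv
  rw [wedgeMatrix_mulVec_dotProduct_self, cross_dot_cross, dotProduct_comm B v]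
  nlinarith [sq_nonneg (v ⬝ᵥ B)]

end Matrix

open Matrix

theorem leadingMatrix6_eq_submatrix_fromBlocks (B : Fin 3 → ℝ) :
    leadingMatrix6 B = (fromBlocks 1 (wedgeMatrix B) (wedgeMatrix B)ᵀ 1).submatrix
      finSumFinEquiv.symm finSumFinEquiv.symm := by
  ext i j
  fin_cases i <;> fin_cases j <;> rfl

theorem stmt_2 (B : Fin 3 → ℝ) (hB : B 0 ^ 2 + B 1 ^ 2 + B 2 ^ 2 < 1) :
    (leadingMatrix6 B).PosDef := by
  have hB' : B ⬝ᵥ B < 1 := by simpa only [vec3_dotProduct, sq] using hB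
  rw [leadingMatrix6_eq_submatrix_fromBlocks]
  exact (posDef_fromBlocks_one_of_strict_contraction _
    fun v hv => wedgeMatrix_mulVec_dotProduct_self_lt hB' hv).submatrix
      finSumFinEquiv.symm.injective
end

section
/- Suppose the symmetric part S_{ij}(t) = ω^i_{lj}(t) + ω^j_{li}(t) (for fixed l and each pair i,j) satisfies the linear ODE system ∂₀ S_{ij} = X_i^p S_{pj} + X_j^p S_{pi} with continuous coefficients X, and S_{ij}(0) = 0. Then ω^k_{ij}(t) = -ω^j_{ik}(t) for all t. -/
open Matrix

/-! For each `l`, the matrix `S_l = (ω^i_{lj} + ω^j_{li})_{ij}` solves the linear ODE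
`S' = X S + (X S)ᵀ`. In the Frobenius norm this gives `‖S'‖ ≤ 2 ‖X‖ ‖S‖`, so Grönwall's inequality
and `S_l(0) = 0` force `S_l ≡ 0`; the `(k, j)` entry of `S_i` is `ω^k_{ij} + ω^j_{ik}`. -/

section Gronwall

variable {E : Type*} [NormedAddCommGroup E] [NormedSpace ℝ E] {f f' : ℝ → E} {C : ℝ → ℝ} {a : ℝ}

theorem eq_zero_of_norm_deriv_le_mul_norm_of_le (hf : ∀ t, HasDerivAt f (f' t) t)
    (hC : Continuous C) (bound : ∀ t, ‖f' t‖ ≤ C t * ‖f t‖) (ha : f a = 0) {t : ℝ} (ht : a ≤ t) :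
    f t = 0 := by
  obtain ⟨K, hK⟩ := isCompact_Icc.exists_bound_of_continuousOn (s := Set.Icc a t) hC.continuousOn
  refine eq_zero_of_abs_deriv_le_mul_abs_self_of_eq_zero_right (K := K)
    (fun s _ => (hf s).continuousAt.continuousWithinAt) (fun s _ => (hf s).hasDerivWithinAt) ha
    (fun s hs => ?_) t ⟨ht, le_rfl⟩
  calc ‖f' s‖ ≤ C s * ‖f s‖ := bound s
    _ ≤ K * ‖f s‖ := by
      gcongr
      exact (le_abs_self _).trans (hK s (Set.Ico_subset_Icc_self hs))

theorem eq_zero_of_norm_deriv_le_mul_norm (hf : ∀ t, HasDerivAt f (f' t) t) (hC : Continuous C)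
    (bound : ∀ t, ‖f' t‖ ≤ C t * ‖f t‖) (ha : f a = 0) (t : ℝ) : f t = 0 := by
  rcases le_total a t with ht | ht
  · exact eq_zero_of_norm_deriv_le_mul_norm_of_le hf hC bound ha ht
  · have hf_neg : ∀ s, HasDerivAt (fun s => f (-s)) ((-1 : ℝ) • f' (-s)) s := fun s =>
      (hf (-s)).scomp s (hasDerivAt_neg s)
    simpa using eq_zero_of_norm_deriv_le_mul_norm_of_le hf_neg (hC.comp continuous_neg)
      (fun s => by simpa using bound (-s)) (by simpa using ha) (neg_le_neg ht)

end Gronwall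

section Frobenius

attribute [local instance] Matrix.frobeniusNormedAddCommGroup Matrix.frobeniusNormedSpace

theorem Matrix.frobenius_norm_mul_add_transpose_le {n : Type*} [Fintype n] (A S : Matrix n n ℝ) :
    ‖A * S + (A * S)ᵀ‖ ≤ 2 * ‖A‖ * ‖S‖ :=
  calc ‖A * S + (A * S)ᵀ‖ ≤ ‖A * S‖ + ‖(A * S)ᵀ‖ := norm_add_le _ _
    _ = 2 * ‖A * S‖ := by rw [frobenius_norm_transpose]; ring
    _ ≤ 2 * ‖A‖ * ‖S‖ := by
      rw [mul_assoc]; exact mul_le_mul_of_nonneg_left (frobenius_norm_mul A S) two_pos.le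

theorem Matrix.eq_zero_of_hasDerivAt_mul_add_transpose {n : Type*} [Fintype n]
    {A S : ℝ → Matrix n n ℝ} {a : ℝ} (hA : Continuous A)
    (hS : ∀ t, HasDerivAt S (A t * S t + (A t * S t)ᵀ) t) (ha : S a = 0) (t : ℝ) : S t = 0 :=
  eq_zero_of_norm_deriv_le_mul_norm hS (continuous_const.mul hA.norm)
    (fun t => frobenius_norm_mul_add_transpose_le (A t) (S t)) ha t

end Frobenius

/-- Propagation of the antisymmetry of the spatial connection coefficients
(part of Lemma 3.2): if the symmetric part `S_{ij} = ω^i_{lj} + ω^j_{li}`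
(for each fixed `l`) satisfies the linear ODE system
`∂₀ S_{ij} = X_i^p S_{pj} + X_j^p S_{pi}` with continuous coefficients `X` and
vanishes at `t = 0`, then `ω^k_{ij}(t) = -ω^j_{ik}(t)` for all `t`.
Here `ω t k i j` denotes `ω^k_{ij}(t)`. -/
theorem stmt_6 (ω : ℝ → Fin 3 → Fin 3 → Fin 3 → ℝ)
    (X : ℝ → Fin 3 → Fin 3 → ℝ) (hX : Continuous X)
    (hS : ∀ (l i j : Fin 3) (t : ℝ),
      HasDerivAt (fun s => ω s i l j + ω s j l i)
        ((∑ p, X t i p * (ω t p l j + ω t j l p)) +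
          ∑ p, X t j p * (ω t p l i + ω t i l p)) t)
    (h0 : ∀ l i j : Fin 3, ω 0 i l j + ω 0 j l i = 0) :
    ∀ (t : ℝ) (k i j : Fin 3), ω t k i j = -ω t j i k := by
  intro t k l j
  let S : ℝ → Matrix (Fin 3) (Fin 3) ℝ := fun s => of fun i j => ω s i l j + ω s j l i
  have hS_deriv : ∀ s, HasDerivAt S (of (X s) * S s + (of (X s) * S s)ᵀ) s := fun s =>
    hasDerivAt_pi.2 fun i => hasDerivAt_pi.2 fun j => hS l i j s
  have hS_zero : S t = 0 :=
    eq_zero_of_hasDerivAt_mul_add_transpose (A := fun s => of (X s)) hX hS_deriv (ext (h0 l)) t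
  have hS_kj := congrFun₂ hS_zero k j
  simp only [S, of_apply, Matrix.zero_apply] at hS_kj
  linarith
end
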